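/- arXiv:1211.3041 — 8 statements merged into one kernel-verified Lean document; each statement's English description precedes it below -/
import Mathlib

section
/- Let (X,d) be a metric space, S ⊆ X a nonempty subset, D ≥ 1 a real number, and ρ : S × S → [0,∞) an ultrametric on S satisfying d(x,y) ≤ ρ(x,y) ≤ D·d(x,y) for all x,y ∈ S. Assume that every point y ∈ X has a nearest point in S (i.e., there exists N(y) ∈ S with d(y,N(y)) = inf_{x∈S} d(x,y)). Then there exists an ultrametric ρ̄ : X × X → [0,∞) such that: (1) ρ̄(x,y) = ρ(x,y) for all x,y ∈ S; (2) ρ̄(x,y) ≥ (D/(D+1))·d(x,y) for all x,y ∈ X; and (3) (2D/(2D+1))·d(x,y) ≤ ρ̄(x,y) ≤ 2D·d(x,y) for all x ∈ S and y ∈ X. -/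
/-!
Retract every point `y` to a nearest point `N y ∈ S` and set, for `x ≠ y`,
`ρ' x y = max (ρ (N x) (N y)) (2 D · max (d(x, N x), d(y, N y)))`.
The strong triangle inequality for `ρ'` is inherited from that of `ρ` on the retracted points,
since the second term is a maximum of quantities attached to the single points. The distance
bounds follow from `d(x, y) ≤ d(x, N x) + d(N x, N y) + d(N y, y)`, each summand being controlled
by `ρ'`, and, for `x ∈ S`, from `d(y, N y) ≤ d(y, x)`.
-/

open Metric

section

variable {X : Type*} [MetricSpace X]

structure IsNearestPointMap (S : Set X) (N : X → X) : Prop where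
  mem : ∀ y, N y ∈ S
  dist_le : ∀ y, ∀ s ∈ S, dist y (N y) ≤ dist y s

theorem exists_isNearestPointMap {S : Set X} (h : ∀ y : X, ∃ n ∈ S, dist y n = infDist y S) :
    ∃ N, IsNearestPointMap S N := by
  choose N hN_mem hN_dist using h
  exact ⟨N, hN_mem, fun y s hs => (hN_dist y).symm ▸ infDist_le_dist_of_mem hs⟩

theorem IsNearestPointMap.apply_eq_self {S : Set X} {N : X → X} (hN : IsNearestPointMap S N)
    {x : X} (hx : x ∈ S) : N x = x :=
  (dist_le_zero.mp (by simpa using hN.dist_le x x hx)).symm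

open Classical in
noncomputable def extendByNearest (ρ : X → X → ℝ) (N : X → X) (D : ℝ) (x y : X) : ℝ :=
  if x = y then 0 else max (ρ (N x) (N y)) (2 * D * max (dist x (N x)) (dist y (N y)))

namespace extendByNearest

variable {S : Set X} {ρ : X → X → ℝ} {N : X → X} {D : ℝ} {x y : X}

@[simp]
theorem apply_self (x : X) : extendByNearest ρ N D x x = 0 := if_pos rfl

theorem of_ne (h : x ≠ y) : extendByNearest ρ N D x y =
    max (ρ (N x) (N y)) (2 * D * max (dist x (N x)) (dist y (N y))) := if_neg h

theorem rho_le_of_ne (h : x ≠ y) : ρ (N x) (N y) ≤ extendByNearest ρ N D x y :=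
  (of_ne h).symm ▸ le_max_left _ _

theorem two_mul_dist_left_le_of_ne (hD : 0 ≤ D) (h : x ≠ y) :
    2 * D * dist x (N x) ≤ extendByNearest ρ N D x y := by
  rw [of_ne h]
  exact le_max_of_le_right (by gcongr; exact le_max_left _ _)

theorem two_mul_dist_right_le_of_ne (hD : 0 ≤ D) (h : x ≠ y) :
    2 * D * dist y (N y) ≤ extendByNearest ρ N D x y := by
  rw [of_ne h]
  exact le_max_of_le_right (by gcongr; exact le_max_right _ _)

theorem nonneg (hD : 0 ≤ D) (x y : X) : 0 ≤ extendByNearest ρ N D x y := by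
  rcases eq_or_ne x y with rfl | h
  · simp
  · exact (by positivity : (0 : ℝ) ≤ 2 * D * dist x (N x)).trans (two_mul_dist_left_le_of_ne hD h)

theorem comm (hN : ∀ y, N y ∈ S) (hρ_symm : ∀ x ∈ S, ∀ y ∈ S, ρ x y = ρ y x) (x y : X) :
    extendByNearest ρ N D x y = extendByNearest ρ N D y x := by
  rcases eq_or_ne x y with rfl | h
  · rfl
  · rw [of_ne h, of_ne h.symm, hρ_symm _ (hN x) _ (hN y), max_comm (dist x (N x))]

theorem triangle_max (hD : 0 ≤ D) (hN : ∀ y, N y ∈ S)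
    (hρ_ultra : ∀ x ∈ S, ∀ y ∈ S, ∀ z ∈ S, ρ x z ≤ max (ρ x y) (ρ y z)) (x y z : X) :
    extendByNearest ρ N D x z ≤ max (extendByNearest ρ N D x y) (extendByNearest ρ N D y z) := by
  rcases eq_or_ne x z with rfl | hxz
  · simpa using le_max_of_le_left (nonneg hD x y)
  rcases eq_or_ne x y with rfl | hxy
  · exact le_max_right _ _
  rcases eq_or_ne y z with rfl | hyz
  · exact le_max_left _ _
  rw [of_ne hxz]
  refine max_le ?_ ?_
  · calc ρ (N x) (N z) ≤ max (ρ (N x) (N y)) (ρ (N y) (N z)) :=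
          hρ_ultra _ (hN x) _ (hN y) _ (hN z)
      _ ≤ _ := max_le_max (rho_le_of_ne hxy) (rho_le_of_ne hyz)
  · rw [mul_max_of_nonneg _ _ (by positivity)]
    exact max_le_max (two_mul_dist_left_le_of_ne hD hxy) (two_mul_dist_right_le_of_ne hD hyz)

theorem mul_dist_le (hD : 0 ≤ D) (hN : ∀ y, N y ∈ S) (hρ_lower : ∀ x ∈ S, ∀ y ∈ S, dist x y ≤ ρ x y)
    (x y : X) : D / (D + 1) * dist x y ≤ extendByNearest ρ N D x y := by
  rcases eq_or_ne x y with rfl | h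
  · simp
  have hx : 2 * D * dist x (N x) ≤ extendByNearest ρ N D x y := two_mul_dist_left_le_of_ne hD h
  have hy : 2 * D * dist y (N y) ≤ extendByNearest ρ N D x y := two_mul_dist_right_le_of_ne hD h
  have hNxy : dist (N x) (N y) ≤ extendByNearest ρ N D x y :=
    (hρ_lower _ (hN x) _ (hN y)).trans (rho_le_of_ne h)
  have htri := dist_triangle4 x (N x) (N y) y
  rw [dist_comm (N y)] at htri
  rw [div_mul_eq_mul_div, div_le_iff₀ (by linarith)]
  nlinarith [nonneg (ρ := ρ) (N := N) hD x y]

theorem eq_zero_iff (hD : 0 < D) (hN : ∀ y, N y ∈ S)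
    (hρ_lower : ∀ x ∈ S, ∀ y ∈ S, dist x y ≤ ρ x y) :
    extendByNearest ρ N D x y = 0 ↔ x = y := by
  refine ⟨fun h0 => ?_, fun h => h ▸ apply_self x⟩
  have hle := mul_dist_le hD.le hN hρ_lower x y
  rw [h0] at hle
  have : 0 < D / (D + 1) := by positivity
  exact dist_le_zero.mp (nonpos_of_mul_nonpos_right hle this)

theorem eq_of_mem (hN : IsNearestPointMap S N) (hρ_self : ∀ x ∈ S, ρ x x = 0)
    (hρ_nonneg : ∀ x ∈ S, ∀ y ∈ S, 0 ≤ ρ x y) {x y : X} (hx : x ∈ S) (hy : y ∈ S) :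
    extendByNearest ρ N D x y = ρ x y := by
  rcases eq_or_ne x y with rfl | h
  · simp [hρ_self x hx]
  · simp [of_ne h, hN.apply_eq_self hx, hN.apply_eq_self hy, hρ_nonneg x hx y hy]

theorem le_mul_dist_of_mem (hD : 0 ≤ D) (hN : IsNearestPointMap S N)
    (hρ_upper : ∀ x ∈ S, ∀ y ∈ S, ρ x y ≤ D * dist x y) (hx : x ∈ S) (y : X) :
    extendByNearest ρ N D x y ≤ 2 * D * dist x y := by
  rcases eq_or_ne x y with rfl | h
  · simp
  have hnear : dist y (N y) ≤ dist x y := dist_comm x y ▸ hN.dist_le y x hx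
  rw [of_ne h, hN.apply_eq_self hx, dist_self, max_eq_right dist_nonneg]
  refine max_le ?_ (by gcongr)
  calc ρ x (N y) ≤ D * dist x (N y) := hρ_upper x hx _ (hN.mem y)
    _ ≤ D * (dist x y + dist y (N y)) := by gcongr; exact dist_triangle _ _ _
    _ ≤ 2 * D * dist x y := by nlinarith

theorem mul_dist_le_of_mem (hD : 0 ≤ D) (hN : IsNearestPointMap S N)
    (hρ_lower : ∀ x ∈ S, ∀ y ∈ S, dist x y ≤ ρ x y) (hx : x ∈ S) (y : X) :
    2 * D / (2 * D + 1) * dist x y ≤ extendByNearest ρ N D x y := by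
  rcases eq_or_ne x y with rfl | h
  · simp
  have hρ : ρ (N x) (N y) ≤ extendByNearest ρ N D x y := rho_le_of_ne h
  rw [hN.apply_eq_self hx] at hρ
  have hxNy : dist x (N y) ≤ extendByNearest ρ N D x y := (hρ_lower x hx _ (hN.mem y)).trans hρ
  have hy : 2 * D * dist y (N y) ≤ extendByNearest ρ N D x y := two_mul_dist_right_le_of_ne hD h
  have htri := dist_triangle x (N y) y
  rw [dist_comm (N y)] at htri
  rw [div_mul_eq_mul_div, div_le_iff₀ (by linarith)]
  nlinarith [nonneg (ρ := ρ) (N := N) hD x y]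

end extendByNearest

end

theorem ultrametric_extension_general
    {X : Type*} [MetricSpace X] (S : Set X)
    (D : ℝ) (hD : 1 ≤ D) (ρ : X → X → ℝ)
    (hρ_symm : ∀ x ∈ S, ∀ y ∈ S, ρ x y = ρ y x)
    -- ρ satisfies the strong triangle inequality on S (so it is an ultrametric on S):
    (hρ_ultra : ∀ x ∈ S, ∀ y ∈ S, ∀ z ∈ S, ρ x z ≤ max (ρ x y) (ρ y z))
    -- ρ is sandwiched between d and D·d on S:
    (hρ_lower : ∀ x ∈ S, ∀ y ∈ S, dist x y ≤ ρ x y)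
    (hρ_upper : ∀ x ∈ S, ∀ y ∈ S, ρ x y ≤ D * dist x y)
    -- every point of X has a nearest point in S:
    (hnear : ∀ y : X, ∃ n ∈ S, dist y n = Metric.infDist y S) :
    ∃ ρ' : X → X → ℝ,
      -- ρ' is an ultrametric on X:
      (∀ x y : X, 0 ≤ ρ' x y) ∧
      (∀ x y : X, (ρ' x y = 0 ↔ x = y)) ∧
      (∀ x y : X, ρ' x y = ρ' y x) ∧
      (∀ x y z : X, ρ' x z ≤ max (ρ' x y) (ρ' y z)) ∧
      -- (1) ρ' extends ρ:
      (∀ x ∈ S, ∀ y ∈ S, ρ' x y = ρ x y) ∧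
      -- (2) lower bound on all pairs:
      (∀ x y : X, (D / (D + 1)) * dist x y ≤ ρ' x y) ∧
      -- (3) two-sided bound on pairs from S × X:
      (∀ x ∈ S, ∀ y : X,
        (2 * D / (2 * D + 1)) * dist x y ≤ ρ' x y ∧ ρ' x y ≤ 2 * D * dist x y) := by
  obtain ⟨N, hN⟩ := exists_isNearestPointMap hnear
  have hD₀ : 0 < D := by linarith
  have hρ_nonneg : ∀ x ∈ S, ∀ y ∈ S, 0 ≤ ρ x y := fun x hx y hy =>
    dist_nonneg.trans (hρ_lower x hx y hy)
  have hρ_self : ∀ x ∈ S, ρ x x = 0 := fun x hx =>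
    le_antisymm (by simpa using hρ_upper x hx x hx) (hρ_nonneg x hx x hx)
  exact ⟨extendByNearest ρ N D,
    extendByNearest.nonneg hD₀.le,
    fun _ _ => extendByNearest.eq_zero_iff hD₀ hN.mem hρ_lower,
    extendByNearest.comm hN.mem hρ_symm,
    extendByNearest.triangle_max hD₀.le hN.mem hρ_ultra,
    fun _ hx _ hy => extendByNearest.eq_of_mem hN hρ_self hρ_nonneg hx hy,
    extendByNearest.mul_dist_le hD₀.le hN.mem hρ_lower,
    fun _ hx y => ⟨extendByNearest.mul_dist_le_of_mem hD₀.le hN hρ_lower hx y,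
      extendByNearest.le_mul_dist_of_mem hD₀.le hN hρ_upper hx y⟩⟩

/-- Extension of an approximate ultrametric from a subset `S` of a metric
space `X` to all of `X`, assuming every point of `X` has a nearest point in `S`. -/
theorem ultrametric_extension
    {X : Type*} [MetricSpace X] (S : Set X) (hS : S.Nonempty)
    (D : ℝ) (hD : 1 ≤ D) (ρ : X → X → ℝ)
    -- ρ is a metric on S:
    (hρ_nonneg : ∀ x ∈ S, ∀ y ∈ S, 0 ≤ ρ x y)
    (hρ_eq : ∀ x ∈ S, ∀ y ∈ S, (ρ x y = 0 ↔ x = y))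
    (hρ_symm : ∀ x ∈ S, ∀ y ∈ S, ρ x y = ρ y x)
    -- ρ satisfies the strong triangle inequality on S (so it is an ultrametric on S):
    (hρ_ultra : ∀ x ∈ S, ∀ y ∈ S, ∀ z ∈ S, ρ x z ≤ max (ρ x y) (ρ y z))
    -- ρ is sandwiched between d and D·d on S:
    (hρ_lower : ∀ x ∈ S, ∀ y ∈ S, dist x y ≤ ρ x y)
    (hρ_upper : ∀ x ∈ S, ∀ y ∈ S, ρ x y ≤ D * dist x y)
    -- every point of X has a nearest point in S:
    (hnear : ∀ y : X, ∃ n ∈ S, dist y n = Metric.infDist y S) :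
    ∃ ρ' : X → X → ℝ,
      -- ρ' is an ultrametric on X:
      (∀ x y : X, 0 ≤ ρ' x y) ∧
      (∀ x y : X, (ρ' x y = 0 ↔ x = y)) ∧
      (∀ x y : X, ρ' x y = ρ' y x) ∧
      (∀ x y z : X, ρ' x z ≤ max (ρ' x y) (ρ' y z)) ∧
      -- (1) ρ' extends ρ:
      (∀ x ∈ S, ∀ y ∈ S, ρ' x y = ρ x y) ∧
      -- (2) lower bound on all pairs:
      (∀ x y : X, (D / (D + 1)) * dist x y ≤ ρ' x y) ∧
      -- (3) two-sided bound on pairs from S × X: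
      (∀ x ∈ S, ∀ y : X,
        (2 * D / (2 * D + 1)) * dist x y ≤ ρ' x y ∧ ρ' x y ≤ 2 * D * dist x y) :=
  ultrametric_extension_general S D hD ρ hρ_symm hρ_ultra hρ_lower hρ_upper hnear
end

section
/- Let (X,d) be a metric space, S ⊆ X a nonempty subset, D ≥ 1 a real number, and ρ : S × S → [0,∞) an ultrametric on S satisfying d(x,y) ≤ ρ(x,y) ≤ D·d(x,y) for all x,y ∈ S. Assume every point y ∈ X has a nearest point in S. Then there exists an ultrametric ρ̄ : X × X → [0,∞) extending ρ that (2D+1)-approximates d on pairs from S × X; that is, there exists c > 0 such that d(x,y) ≤ c·ρ̄(x,y) ≤ (2D+1)·d(x,y) for all x ∈ S, y ∈ X. -/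
/-!
Send every point `y` to a nearest point `π y ∈ S` and put, for `x ≠ y`,
`ρ̄ x y = max (ρ (π x) (π y)) (max (2D · d(x, π x)) (2D · d(y, π y)))`.
Taking the maximum of an ultrametric pulled back along a retraction and of a "height" vanishing
exactly on `S` gives an ultrametric. For `x ∈ S` the nearest point satisfies
`d(y, π y) ≤ d(x, y)`, hence `d(x, π y) ≤ 2 d(x, y)`, which yields `ρ̄ x y ≤ 2D · d(x, y)`;
conversely `d(x, y) ≤ ρ(x, π y) + d(y, π y) ≤ (1 + 1/(2D)) ρ̄ x y`.
-/

structure IsUltrametricOn {X : Type*} (ρ : X → X → ℝ) (S : Set X) : Prop where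
  nonneg : ∀ x ∈ S, ∀ y ∈ S, 0 ≤ ρ x y
  eq_zero_iff : ∀ x ∈ S, ∀ y ∈ S, ρ x y = 0 ↔ x = y
  symm : ∀ x ∈ S, ∀ y ∈ S, ρ x y = ρ y x
  le_max : ∀ x ∈ S, ∀ y ∈ S, ∀ z ∈ S, ρ x z ≤ max (ρ x y) (ρ y z)

open Classical in
noncomputable def extendUltrametric {X : Type*} (ρ : X → X → ℝ) (r : X → X) (h : X → ℝ)
    (x y : X) : ℝ :=
  if x = y then 0 else max (ρ (r x) (r y)) (max (h x) (h y))

namespace extendUltrametric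

variable {X : Type*} {S : Set X} {ρ : X → X → ℝ} {r : X → X} {h : X → ℝ}

@[simp]
theorem self (x : X) : extendUltrametric ρ r h x x = 0 := if_pos rfl

theorem of_ne {x y : X} (hxy : x ≠ y) :
    extendUltrametric ρ r h x y = max (ρ (r x) (r y)) (max (h x) (h y)) := if_neg hxy

theorem nonneg (hh : ∀ x, 0 ≤ h x) (x y : X) : 0 ≤ extendUltrametric ρ r h x y := by
  by_cases hxy : x = y
  · simp [hxy]
  · rw [of_ne hxy]
    exact (hh x).trans ((le_max_left _ _).trans (le_max_right _ _))

theorem comm (hρ : IsUltrametricOn ρ S) (hr : ∀ x, r x ∈ S) (x y : X) :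
    extendUltrametric ρ r h x y = extendUltrametric ρ r h y x := by
  by_cases hxy : x = y
  · rw [hxy]
  · rw [of_ne hxy, of_ne (Ne.symm hxy), hρ.symm _ (hr x) _ (hr y), max_comm (h x)]

theorem eq_zero_iff (hρ : IsUltrametricOn ρ S) (hr : ∀ x, r x ∈ S) (hh : ∀ x, 0 ≤ h x)
    (hh_eq_zero : ∀ x, h x = 0 → r x = x) (x y : X) :
    extendUltrametric ρ r h x y = 0 ↔ x = y := by
  refine ⟨fun h0 => ?_, fun hxy => hxy ▸ self x⟩
  by_contra hxy
  rw [of_ne hxy] at h0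
  obtain ⟨hρ0, hx0, hy0⟩ : ρ (r x) (r y) ≤ 0 ∧ h x ≤ 0 ∧ h y ≤ 0 := by
    simpa only [max_le_iff] using h0.le
  have hx : r x = x := hh_eq_zero x (le_antisymm hx0 (hh x))
  have hy : r y = y := hh_eq_zero y (le_antisymm hy0 (hh y))
  apply hxy
  rw [← hx, ← hy, ← hρ.eq_zero_iff _ (hr x) _ (hr y)]
  exact le_antisymm hρ0 (hρ.nonneg _ (hr x) _ (hr y))

theorem le_max (hρ : IsUltrametricOn ρ S) (hr : ∀ x, r x ∈ S) (hh : ∀ x, 0 ≤ h x)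
    (x y z : X) :
    extendUltrametric ρ r h x z ≤
      max (extendUltrametric ρ r h x y) (extendUltrametric ρ r h y z) := by
  by_cases hxz : x = z
  · rw [hxz, self]
    exact le_max_of_le_left (nonneg hh z y)
  by_cases hxy : x = y
  · subst hxy; exact le_max_right _ _
  by_cases hyz : y = z
  · subst hyz; exact le_max_left _ _
  rw [of_ne hxz, of_ne hxy, of_ne hyz]
  refine max_le ?_ (max_le ?_ ?_)
  · exact (hρ.le_max _ (hr x) _ (hr y) _ (hr z)).trans
      (max_le_max (le_max_left _ _) (le_max_left _ _))
  · exact le_max_of_le_left (le_max_of_le_right (le_max_left _ _))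
  · exact le_max_of_le_right (le_max_of_le_right (le_max_right _ _))

theorem eq_of_mem (hρ : IsUltrametricOn ρ S) (hr : ∀ x ∈ S, r x = x)
    (hh : ∀ x ∈ S, h x = 0) {x y : X} (hx : x ∈ S) (hy : y ∈ S) :
    extendUltrametric ρ r h x y = ρ x y := by
  by_cases hxy : x = y
  · subst hxy
    rw [self, (hρ.eq_zero_iff x hx x hx).mpr rfl]
  · rw [of_ne hxy, hr x hx, hr y hy, hh x hx, hh y hy, max_self,
      max_eq_left (hρ.nonneg x hx y hy)]

end extendUltrametric

structure IsNearestPointMap_s1 {X : Type*} [MetricSpace X] (S : Set X) (r : X → X) : Prop where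
  mem : ∀ y, r y ∈ S
  dist_le : ∀ y, ∀ s ∈ S, dist y (r y) ≤ dist y s

namespace IsNearestPointMap_s1

variable {X : Type*} [MetricSpace X] {S : Set X} {r : X → X}

theorem exists_of_forall_exists_infDist
    (hnear : ∀ y : X, ∃ n ∈ S, dist y n = Metric.infDist y S) :
    ∃ r, IsNearestPointMap_s1 S r := by
  choose r hrS hr using hnear
  exact ⟨r, hrS, fun y s hs => hr y ▸ Metric.infDist_le_dist_of_mem hs⟩

theorem apply_of_mem (hr : IsNearestPointMap_s1 S r) {s : X} (hs : s ∈ S) : r s = s := by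
  have h := hr.dist_le s s hs
  rw [dist_self] at h
  exact (dist_le_zero.mp h).symm

theorem dist_apply_le_two_mul (hr : IsNearestPointMap_s1 S r) {x : X} (hx : x ∈ S) (y : X) :
    dist x (r y) ≤ 2 * dist x y :=
  calc dist x (r y) ≤ dist x y + dist y (r y) := dist_triangle _ _ _
    _ ≤ dist x y + dist y x := by gcongr; exact hr.dist_le y x hx
    _ = 2 * dist x y := by rw [dist_comm y x]; ring

end IsNearestPointMap_s1

section Approximation

variable {X : Type*} [MetricSpace X] {S : Set X} {ρ : X → X → ℝ} {r : X → X} {D : ℝ}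

theorem extendUltrametric_le_two_mul_dist (hr : IsNearestPointMap_s1 S r) (hD : 0 ≤ D)
    (hρ_upper : ∀ x ∈ S, ∀ y ∈ S, ρ x y ≤ D * dist x y) {x : X} (hx : x ∈ S) (y : X) :
    extendUltrametric ρ r (fun z => 2 * D * dist z (r z)) x y ≤ 2 * D * dist x y := by
  by_cases hxy : x = y
  · subst hxy; simp
  rw [extendUltrametric.of_ne hxy, hr.apply_of_mem hx, dist_self, mul_zero]
  refine max_le ?_ (max_le (by positivity) ?_)
  · calc ρ x (r y) ≤ D * dist x (r y) := hρ_upper x hx _ (hr.mem y)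
      _ ≤ D * (2 * dist x y) := mul_le_mul_of_nonneg_left (hr.dist_apply_le_two_mul hx y) hD
      _ = 2 * D * dist x y := by ring
  · rw [dist_comm x y]
    exact mul_le_mul_of_nonneg_left (hr.dist_le y x hx) (by positivity)

theorem two_mul_dist_le_extendUltrametric (hr : IsNearestPointMap_s1 S r) (hD : 0 ≤ D)
    (hρ_lower : ∀ x ∈ S, ∀ y ∈ S, dist x y ≤ ρ x y) {x : X} (hx : x ∈ S) (y : X) :
    2 * D * dist x y ≤
      (2 * D + 1) * extendUltrametric ρ r (fun z => 2 * D * dist z (r z)) x y := by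
  by_cases hxy : x = y
  · subst hxy; simp
  have he := extendUltrametric.of_ne (ρ := ρ) (r := r) (h := fun z => 2 * D * dist z (r z)) hxy
  rw [hr.apply_of_mem hx] at he
  set e := extendUltrametric ρ r (fun z => 2 * D * dist z (r z)) x y
  have hρe : ρ x (r y) ≤ e := he ▸ le_max_left _ _
  have hhe : 2 * D * dist y (r y) ≤ e := he ▸ le_max_of_le_right (le_max_right _ _)
  have hdist : dist x y ≤ ρ x (r y) + dist y (r y) :=
    calc dist x y ≤ dist x (r y) + dist (r y) y := dist_triangle _ _ _
      _ ≤ ρ x (r y) + dist y (r y) := by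
        rw [dist_comm (r y) y]
        gcongr
        exact hρ_lower x hx _ (hr.mem y)
  calc 2 * D * dist x y ≤ 2 * D * ρ x (r y) + 2 * D * dist y (r y) := by
        rw [← mul_add]; exact mul_le_mul_of_nonneg_left hdist (by positivity)
    _ ≤ 2 * D * e + e := add_le_add (mul_le_mul_of_nonneg_left hρe (by positivity)) hhe
    _ = (2 * D + 1) * e := by ring

end Approximation

theorem ultrametric_extension_approx_general
    {X : Type*} [MetricSpace X] (S : Set X)
    (D : ℝ) (hD : 1 ≤ D) (ρ : X → X → ℝ)
    -- ρ is a metric on S: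
    (hρ_nonneg : ∀ x ∈ S, ∀ y ∈ S, 0 ≤ ρ x y)
    (hρ_eq : ∀ x ∈ S, ∀ y ∈ S, (ρ x y = 0 ↔ x = y))
    (hρ_symm : ∀ x ∈ S, ∀ y ∈ S, ρ x y = ρ y x)
    -- strong triangle inequality on S (so ρ is an ultrametric on S):
    (hρ_ultra : ∀ x ∈ S, ∀ y ∈ S, ∀ z ∈ S, ρ x z ≤ max (ρ x y) (ρ y z))
    -- ρ is sandwiched between d and D·d on S:
    (hρ_lower : ∀ x ∈ S, ∀ y ∈ S, dist x y ≤ ρ x y)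
    (hρ_upper : ∀ x ∈ S, ∀ y ∈ S, ρ x y ≤ D * dist x y)
    -- every point of X has a nearest point in S:
    (hnear : ∀ y : X, ∃ n ∈ S, dist y n = Metric.infDist y S) :
    ∃ ρ' : X → X → ℝ,
      -- ρ' is an ultrametric on X:
      (∀ x y : X, 0 ≤ ρ' x y) ∧
      (∀ x y : X, (ρ' x y = 0 ↔ x = y)) ∧
      (∀ x y : X, ρ' x y = ρ' y x) ∧
      (∀ x y z : X, ρ' x z ≤ max (ρ' x y) (ρ' y z)) ∧
      -- ρ' extends ρ:
      (∀ x ∈ S, ∀ y ∈ S, ρ' x y = ρ x y) ∧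
      -- ρ' (2D+1)-approximates d on pairs from S × X:
      (∃ c : ℝ, 0 < c ∧ ∀ x ∈ S, ∀ y : X,
        dist x y ≤ c * ρ' x y ∧ c * ρ' x y ≤ (2 * D + 1) * dist x y) := by
  obtain ⟨r, hr⟩ := IsNearestPointMap_s1.exists_of_forall_exists_infDist hnear
  have hρ : IsUltrametricOn ρ S := ⟨hρ_nonneg, hρ_eq, hρ_symm, hρ_ultra⟩
  have hD0 : 0 < D := by linarith
  have h2D : 0 < 2 * D := by positivity
  have hh : ∀ z, 0 ≤ 2 * D * dist z (r z) := fun z => by positivity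
  have hh_eq_zero : ∀ z, 2 * D * dist z (r z) = 0 → r z = z := fun z hz =>
    (dist_eq_zero.mp ((mul_eq_zero.mp hz).resolve_left h2D.ne')).symm
  refine ⟨extendUltrametric ρ r (fun z => 2 * D * dist z (r z)),
    extendUltrametric.nonneg hh, extendUltrametric.eq_zero_iff hρ hr.mem hh hh_eq_zero,
    extendUltrametric.comm hρ hr.mem, extendUltrametric.le_max hρ hr.mem hh,
    fun x hx y hy => extendUltrametric.eq_of_mem hρ (fun _ => hr.apply_of_mem)
      (fun s hs => by simp [hr.apply_of_mem hs]) hx hy,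
    (2 * D + 1) / (2 * D), by positivity, fun x hx y => ⟨?_, ?_⟩⟩
  · rw [div_mul_eq_mul_div, le_div_iff₀ h2D, mul_comm]
    exact two_mul_dist_le_extendUltrametric hr hD0.le hρ_lower hx y
  · have hle := mul_le_mul_of_nonneg_left
      (extendUltrametric_le_two_mul_dist hr hD0.le hρ_upper hx y) (by positivity : 0 ≤ 2 * D + 1)
    rw [div_mul_eq_mul_div, div_le_iff₀ h2D]
    linarith

/-- There is an ultrametric on `X` extending `ρ` which `(2D+1)`-approximates
the metric `d` on pairs from `S × X`. -/
theorem ultrametric_extension_approx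
    {X : Type*} [MetricSpace X] (S : Set X) (hS : S.Nonempty)
    (D : ℝ) (hD : 1 ≤ D) (ρ : X → X → ℝ)
    -- ρ is a metric on S:
    (hρ_nonneg : ∀ x ∈ S, ∀ y ∈ S, 0 ≤ ρ x y)
    (hρ_eq : ∀ x ∈ S, ∀ y ∈ S, (ρ x y = 0 ↔ x = y))
    (hρ_symm : ∀ x ∈ S, ∀ y ∈ S, ρ x y = ρ y x)
    -- strong triangle inequality on S (so ρ is an ultrametric on S):
    (hρ_ultra : ∀ x ∈ S, ∀ y ∈ S, ∀ z ∈ S, ρ x z ≤ max (ρ x y) (ρ y z))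
    -- ρ is sandwiched between d and D·d on S:
    (hρ_lower : ∀ x ∈ S, ∀ y ∈ S, dist x y ≤ ρ x y)
    (hρ_upper : ∀ x ∈ S, ∀ y ∈ S, ρ x y ≤ D * dist x y)
    -- every point of X has a nearest point in S:
    (hnear : ∀ y : X, ∃ n ∈ S, dist y n = Metric.infDist y S) :
    ∃ ρ' : X → X → ℝ,
      -- ρ' is an ultrametric on X:
      (∀ x y : X, 0 ≤ ρ' x y) ∧
      (∀ x y : X, (ρ' x y = 0 ↔ x = y)) ∧
      (∀ x y : X, ρ' x y = ρ' y x) ∧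
      (∀ x y z : X, ρ' x z ≤ max (ρ' x y) (ρ' y z)) ∧
      -- ρ' extends ρ:
      (∀ x ∈ S, ∀ y ∈ S, ρ' x y = ρ x y) ∧
      -- ρ' (2D+1)-approximates d on pairs from S × X:
      (∃ c : ℝ, 0 < c ∧ ∀ x ∈ S, ∀ y : X,
        dist x y ≤ c * ρ' x y ∧ c * ρ' x y ≤ (2 * D + 1) * dist x y) :=
  ultrametric_extension_approx_general S D hD ρ hρ_nonneg hρ_eq hρ_symm hρ_ultra hρ_lower hρ_upper
    hnear
end

section
/- Let (X,d) be a metric space, S ⊆ X a nonempty subset, D ≥ 1 a real number, ρ : S × S → [0,∞) an ultrametric on S satisfying d(x,y) ≤ ρ(x,y) ≤ D·d(x,y) for all x,y ∈ S, and N : X → S a map with N(x) = x for x ∈ S and d(y,N(y)) ≤ d(y,s) for every y ∈ X and s ∈ S. Define ρ̄(x,y) = max{2D·d(x,N(x)), 2D·d(y,N(y)), ρ(N(x),N(y))}. Then ρ̄ satisfies the strong triangle inequality: ρ̄(x,z) ≤ max{ρ̄(x,y), ρ̄(y,z)} for all x,y,z ∈ X. -/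
theorem max_max_le_max_of_le_max {α β : Type*} [LinearOrder β] (f : α → β) (g : α → α → β)
    {x y z : α} (hg : g x z ≤ max (g x y) (g y z)) :
    max (max (f x) (f z)) (g x z) ≤
      max (max (max (f x) (f y)) (g x y)) (max (max (f y) (f z)) (g y z)) :=
  max_le (max_le (le_max_of_le_left (le_max_of_le_left (le_max_left _ _)))
    (le_max_of_le_right (le_max_of_le_left (le_max_right _ _))))
    (hg.trans (max_le_max (le_max_right _ _) (le_max_right _ _)))

theorem extension_strong_triangle_general
    {X : Type*} [MetricSpace X] (S : Set X)
    (D : ℝ) (ρ : X → X → ℝ)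
    -- strong triangle inequality on S (so ρ is an ultrametric on S):
    (hρ_ultra : ∀ x ∈ S, ∀ y ∈ S, ∀ z ∈ S, ρ x z ≤ max (ρ x y) (ρ y z))
    -- N is a nearest-point map onto S:
    (N : X → X) (hN_mem : ∀ x : X, N x ∈ S)
    -- ρ' is the extension formula:
    (ρ' : X → X → ℝ)
    (hρ' : ∀ x y : X,
      ρ' x y = max (max (2 * D * dist x (N x)) (2 * D * dist y (N y))) (ρ (N x) (N y)))    :
    ∀ x y z : X, ρ' x z ≤ max (ρ' x y) (ρ' y z) := by
  intro x y z
  rw [hρ' x z, hρ' x y, hρ' y z]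
  exact max_max_le_max_of_le_max (fun w ↦ 2 * D * dist w (N w)) (fun v w ↦ ρ (N v) (N w))
    (hρ_ultra _ (hN_mem x) _ (hN_mem y) _ (hN_mem z))

/-- The extension formula satisfies the strong triangle inequality. -/
theorem extension_strong_triangle
    {X : Type*} [MetricSpace X] (S : Set X) (hS : S.Nonempty)
    (D : ℝ) (hD : 1 ≤ D) (ρ : X → X → ℝ)
    -- ρ is a metric on S:
    (hρ_nonneg : ∀ x ∈ S, ∀ y ∈ S, 0 ≤ ρ x y)
    (hρ_eq : ∀ x ∈ S, ∀ y ∈ S, (ρ x y = 0 ↔ x = y))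
    (hρ_symm : ∀ x ∈ S, ∀ y ∈ S, ρ x y = ρ y x)
    -- strong triangle inequality on S (so ρ is an ultrametric on S):
    (hρ_ultra : ∀ x ∈ S, ∀ y ∈ S, ∀ z ∈ S, ρ x z ≤ max (ρ x y) (ρ y z))
    -- ρ is sandwiched between d and D·d on S:
    (hρ_lower : ∀ x ∈ S, ∀ y ∈ S, dist x y ≤ ρ x y)
    (hρ_upper : ∀ x ∈ S, ∀ y ∈ S, ρ x y ≤ D * dist x y)
    -- N is a nearest-point map onto S:
    (N : X → X) (hN_mem : ∀ x : X, N x ∈ S)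
    (hN_id : ∀ x ∈ S, N x = x)
    (hN_min : ∀ y : X, ∀ s ∈ S, dist y (N y) ≤ dist y s)
    -- ρ' is the extension formula:
    (ρ' : X → X → ℝ)
    (hρ' : ∀ x y : X,
      ρ' x y = max (max (2 * D * dist x (N x)) (2 * D * dist y (N y))) (ρ (N x) (N y)))    :
    ∀ x y z : X, ρ' x z ≤ max (ρ' x y) (ρ' y z) :=
  extension_strong_triangle_general S D ρ hρ_ultra N hN_mem ρ' hρ'
end

section
/- Let (X,d) be a metric space, S ⊆ X a nonempty subset, D ≥ 1 a real number, ρ : S × S → [0,∞) an ultrametric on S satisfying d(x,y) ≤ ρ(x,y) ≤ D·d(x,y) for all x,y ∈ S, and N : X → S a nearest-point map. Define ρ̄(x,y) = max{2D·d(x,N(x)), 2D·d(y,N(y)), ρ(N(x),N(y))}. Then ρ̄(x,y) ≥ (D/(D+1))·d(x,y) for all x,y ∈ X. -/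
/-! Going from `x` to `y` through `N x` and `N y`, the two outer legs cost at most `ρ̄/(2D)` each and
the middle leg at most `ρ(N x, N y) ≤ ρ̄`, so `d(x, y) ≤ (1 + 1/D) ρ̄`. -/

theorem dist_le_of_two_mul_dist_le_of_dist_le {X : Type*} [PseudoMetricSpace X] {D M : ℝ}
    (hD : 0 < D) {x y x' y' : X} (hx : 2 * D * dist x x' ≤ M) (hy : 2 * D * dist y y' ≤ M)
    (hxy : dist x' y' ≤ M) : D / (D + 1) * dist x y ≤ M := by
  have hpath : dist x y ≤ dist x x' + dist x' y' + dist y y' := by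
    simpa only [dist_comm y' y] using dist_triangle4 x x' y' y
  rw [div_mul_eq_mul_div, div_le_iff₀ (by linarith)]
  nlinarith

theorem extension_lower_bound_all_general
    {X : Type*} [MetricSpace X] (S : Set X)
    (D : ℝ) (hD : 1 ≤ D) (ρ : X → X → ℝ)
    -- ρ is sandwiched between d and D·d on S:
    (hρ_lower : ∀ x ∈ S, ∀ y ∈ S, dist x y ≤ ρ x y)
    -- N is a nearest-point map onto S:
    (N : X → X) (hN_mem : ∀ x : X, N x ∈ S)
    -- ρ' is the extension formula:
    (ρ' : X → X → ℝ)
    (hρ' : ∀ x y : X,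
      ρ' x y = max (max (2 * D * dist x (N x)) (2 * D * dist y (N y))) (ρ (N x) (N y)))    :
    ∀ x y : X, (D / (D + 1)) * dist x y ≤ ρ' x y := by
  intro x y
  rw [hρ']
  refine dist_le_of_two_mul_dist_le_of_dist_le (x' := N x) (y' := N y) (by linarith) ?_ ?_ ?_
  · exact le_max_of_le_left (le_max_left _ _)
  · exact le_max_of_le_left (le_max_right _ _)
  · exact le_max_of_le_right (hρ_lower _ (hN_mem x) _ (hN_mem y))

/-- Lower bound ρ̄(x,y) ≥ (D/(D+1))·d(x,y) for all x, y ∈ X. -/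
theorem extension_lower_bound_all
    {X : Type*} [MetricSpace X] (S : Set X) (hS : S.Nonempty)
    (D : ℝ) (hD : 1 ≤ D) (ρ : X → X → ℝ)
    -- ρ is a metric on S:
    (hρ_nonneg : ∀ x ∈ S, ∀ y ∈ S, 0 ≤ ρ x y)
    (hρ_eq : ∀ x ∈ S, ∀ y ∈ S, (ρ x y = 0 ↔ x = y))
    (hρ_symm : ∀ x ∈ S, ∀ y ∈ S, ρ x y = ρ y x)
    -- strong triangle inequality on S (so ρ is an ultrametric on S):
    (hρ_ultra : ∀ x ∈ S, ∀ y ∈ S, ∀ z ∈ S, ρ x z ≤ max (ρ x y) (ρ y z))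
    -- ρ is sandwiched between d and D·d on S:
    (hρ_lower : ∀ x ∈ S, ∀ y ∈ S, dist x y ≤ ρ x y)
    (hρ_upper : ∀ x ∈ S, ∀ y ∈ S, ρ x y ≤ D * dist x y)
    -- N is a nearest-point map onto S:
    (N : X → X) (hN_mem : ∀ x : X, N x ∈ S)
    (hN_id : ∀ x ∈ S, N x = x)
    (hN_min : ∀ y : X, ∀ s ∈ S, dist y (N y) ≤ dist y s)
    -- ρ' is the extension formula:
    (ρ' : X → X → ℝ)
    (hρ' : ∀ x y : X,
      ρ' x y = max (max (2 * D * dist x (N x)) (2 * D * dist y (N y))) (ρ (N x) (N y)))    :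
    ∀ x y : X, (D / (D + 1)) * dist x y ≤ ρ' x y :=
  extension_lower_bound_all_general S D hD ρ hρ_lower N hN_mem ρ' hρ'
end

section
/- Let (X,d) be a metric space, S ⊆ X a nonempty subset, D ≥ 1 a real number, ρ : S × S → [0,∞) an ultrametric on S satisfying d(x,y) ≤ ρ(x,y) ≤ D·d(x,y) for all x,y ∈ S, and N : X → S a nearest-point map. Define ρ̄(x,y) = max{2D·d(x,N(x)), 2D·d(y,N(y)), ρ(N(x),N(y))}. Then ρ̄(x,y) ≥ (2D/(2D+1))·d(x,y) for all x ∈ S and y ∈ X. -/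
/-!
Since `x ∈ S` we have `N x = x`, so `ρ̄(x, y)` dominates both `ρ(x, N y) ≥ d(x, N y)` and
`2D · d(y, N y)`. The triangle inequality through `N y` then gives
`d(x, y) ≤ ρ̄(x, y) + ρ̄(x, y) / (2D)`.
-/

theorem mul_dist_le_of_dist_le_of_mul_dist_le {X : Type*} [PseudoMetricSpace X] {x y z : X}
    {c M : ℝ} (hc : 0 < c) (hxz : dist x z ≤ M) (hyz : c * dist y z ≤ M) :
    c / (c + 1) * dist x y ≤ M := by
  have hyz' : dist y z ≤ M / c := (le_div_iff₀' hc).mpr hyz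
  have hxy : dist x y ≤ M + M / c := by
    calc dist x y ≤ dist x z + dist y z := dist_triangle_right x y z
      _ ≤ M + M / c := add_le_add hxz hyz'
  calc c / (c + 1) * dist x y ≤ c / (c + 1) * (M + M / c) := by gcongr
    _ = M := by field_simp

theorem extension_lower_bound_S_general
    {X : Type*} [MetricSpace X] (S : Set X)
    (D : ℝ) (hD : 1 ≤ D) (ρ : X → X → ℝ)
    -- ρ is sandwiched between d and D·d on S:
    (hρ_lower : ∀ x ∈ S, ∀ y ∈ S, dist x y ≤ ρ x y)
    -- N is a nearest-point map onto S:
    (N : X → X) (hN_mem : ∀ x : X, N x ∈ S)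
    (hN_id : ∀ x ∈ S, N x = x)
    -- ρ' is the extension formula:
    (ρ' : X → X → ℝ)
    (hρ' : ∀ x y : X,
      ρ' x y = max (max (2 * D * dist x (N x)) (2 * D * dist y (N y))) (ρ (N x) (N y)))    :
    ∀ x ∈ S, ∀ y : X, (2 * D / (2 * D + 1)) * dist x y ≤ ρ' x y := by
  intro x hx y
  have hρ_le : ρ x (N y) ≤ ρ' x y := by
    rw [hρ', hN_id x hx]
    exact le_max_right _ _
  have hdist_le : 2 * D * dist y (N y) ≤ ρ' x y := by
    rw [hρ']
    exact le_max_of_le_left (le_max_right _ _)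
  exact mul_dist_le_of_dist_le_of_mul_dist_le (by linarith)
    ((hρ_lower x hx (N y) (hN_mem y)).trans hρ_le) hdist_le

/-- Lower bound ρ̄(x,y) ≥ (2D/(2D+1))·d(x,y) for x ∈ S, y ∈ X. -/
theorem extension_lower_bound_S
    {X : Type*} [MetricSpace X] (S : Set X) (hS : S.Nonempty)
    (D : ℝ) (hD : 1 ≤ D) (ρ : X → X → ℝ)
    -- ρ is a metric on S:
    (hρ_nonneg : ∀ x ∈ S, ∀ y ∈ S, 0 ≤ ρ x y)
    (hρ_eq : ∀ x ∈ S, ∀ y ∈ S, (ρ x y = 0 ↔ x = y))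
    (hρ_symm : ∀ x ∈ S, ∀ y ∈ S, ρ x y = ρ y x)
    -- strong triangle inequality on S (so ρ is an ultrametric on S):
    (hρ_ultra : ∀ x ∈ S, ∀ y ∈ S, ∀ z ∈ S, ρ x z ≤ max (ρ x y) (ρ y z))
    -- ρ is sandwiched between d and D·d on S:
    (hρ_lower : ∀ x ∈ S, ∀ y ∈ S, dist x y ≤ ρ x y)
    (hρ_upper : ∀ x ∈ S, ∀ y ∈ S, ρ x y ≤ D * dist x y)
    -- N is a nearest-point map onto S:
    (N : X → X) (hN_mem : ∀ x : X, N x ∈ S)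
    (hN_id : ∀ x ∈ S, N x = x)
    (hN_min : ∀ y : X, ∀ s ∈ S, dist y (N y) ≤ dist y s)
    -- ρ' is the extension formula:
    (ρ' : X → X → ℝ)
    (hρ' : ∀ x y : X,
      ρ' x y = max (max (2 * D * dist x (N x)) (2 * D * dist y (N y))) (ρ (N x) (N y)))    :
    ∀ x ∈ S, ∀ y : X, (2 * D / (2 * D + 1)) * dist x y ≤ ρ' x y :=
  extension_lower_bound_S_general S D hD ρ hρ_lower N hN_mem hN_id ρ' hρ'
end

section
/- Let (X,d) be a metric space, S ⊆ X a nonempty subset, D ≥ 1 a real number, ρ : S × S → [0,∞) an ultrametric on S satisfying d(x,y) ≤ ρ(x,y) ≤ D·d(x,y) for all x,y ∈ S, and N : X → S a nearest-point map. Define ρ̄(x,y) = max{2D·d(x,N(x)), 2D·d(y,N(y)), ρ(N(x),N(y))}. Then ρ̄(x,y) ≤ 2D·d(x,y) for all x ∈ S and y ∈ X. -/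
theorem dist_nearestPoint_le_dist {X : Type*} [PseudoMetricSpace X] {S : Set X} {N : X → X}
    (hN_min : ∀ y : X, ∀ s ∈ S, dist y (N y) ≤ dist y s) {x : X} (hx : x ∈ S) (y : X) :
    dist y (N y) ≤ dist x y :=
  dist_comm y x ▸ hN_min y x hx

theorem dist_nearestPoint_le_two_mul {X : Type*} [PseudoMetricSpace X] {S : Set X} {N : X → X}
    (hN_min : ∀ y : X, ∀ s ∈ S, dist y (N y) ≤ dist y s) {x : X} (hx : x ∈ S) (y : X) :
    dist x (N y) ≤ 2 * dist x y := by
  linarith [dist_triangle x y (N y), dist_nearestPoint_le_dist hN_min hx y]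

theorem extension_upper_bound_S_general
    {X : Type*} [MetricSpace X] (S : Set X)
    (D : ℝ) (hD : 1 ≤ D) (ρ : X → X → ℝ)
    -- ρ is sandwiched between d and D·d on S:
    (hρ_upper : ∀ x ∈ S, ∀ y ∈ S, ρ x y ≤ D * dist x y)
    -- N is a nearest-point map onto S:
    (N : X → X) (hN_mem : ∀ x : X, N x ∈ S)
    (hN_id : ∀ x ∈ S, N x = x)
    (hN_min : ∀ y : X, ∀ s ∈ S, dist y (N y) ≤ dist y s)
    -- ρ' is the extension formula:
    (ρ' : X → X → ℝ)
    (hρ' : ∀ x y : X,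
      ρ' x y = max (max (2 * D * dist x (N x)) (2 * D * dist y (N y))) (ρ (N x) (N y)))    :
    ∀ x ∈ S, ∀ y : X, ρ' x y ≤ 2 * D * dist x y := by
  intro x hx y
  have hD0 : 0 ≤ D := zero_le_one.trans hD
  have hρ_le : ρ x (N y) ≤ 2 * D * dist x y :=
    calc ρ x (N y) ≤ D * dist x (N y) := hρ_upper x hx (N y) (hN_mem y)
      _ ≤ D * (2 * dist x y) := by gcongr; exact dist_nearestPoint_le_two_mul hN_min hx y
      _ = 2 * D * dist x y := by ring
  rw [hρ', hN_id x hx, dist_self, mul_zero]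
  refine max_le (max_le (by positivity) ?_) hρ_le
  gcongr
  exact dist_nearestPoint_le_dist hN_min hx y

/-- Upper bound ρ̄(x,y) ≤ 2D·d(x,y) for x ∈ S, y ∈ X. -/
theorem extension_upper_bound_S
    {X : Type*} [MetricSpace X] (S : Set X) (hS : S.Nonempty)
    (D : ℝ) (hD : 1 ≤ D) (ρ : X → X → ℝ)
    -- ρ is a metric on S:
    (hρ_nonneg : ∀ x ∈ S, ∀ y ∈ S, 0 ≤ ρ x y)
    (hρ_eq : ∀ x ∈ S, ∀ y ∈ S, (ρ x y = 0 ↔ x = y))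
    (hρ_symm : ∀ x ∈ S, ∀ y ∈ S, ρ x y = ρ y x)
    -- strong triangle inequality on S (so ρ is an ultrametric on S):
    (hρ_ultra : ∀ x ∈ S, ∀ y ∈ S, ∀ z ∈ S, ρ x z ≤ max (ρ x y) (ρ y z))
    -- ρ is sandwiched between d and D·d on S:
    (hρ_lower : ∀ x ∈ S, ∀ y ∈ S, dist x y ≤ ρ x y)
    (hρ_upper : ∀ x ∈ S, ∀ y ∈ S, ρ x y ≤ D * dist x y)
    -- N is a nearest-point map onto S:
    (N : X → X) (hN_mem : ∀ x : X, N x ∈ S)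
    (hN_id : ∀ x ∈ S, N x = x)
    (hN_min : ∀ y : X, ∀ s ∈ S, dist y (N y) ≤ dist y s)
    -- ρ' is the extension formula:
    (ρ' : X → X → ℝ)
    (hρ' : ∀ x y : X,
      ρ' x y = max (max (2 * D * dist x (N x)) (2 * D * dist y (N y))) (ρ (N x) (N y)))    :
    ∀ x ∈ S, ∀ y : X, ρ' x y ≤ 2 * D * dist x y :=
  extension_upper_bound_S_general S D hD ρ hρ_upper N hN_mem hN_id hN_min ρ' hρ'
end

section
/- Let D ∈ ℕ with D ≥ 1, let X = {0, 1, ..., 2D+1} ⊆ ℤ with the metric d(x,y) = |x−y|, and let S = {1, 3, ..., 2D+1} ⊆ X be the odd integers in X. Let ρ̄ be any ultrametric on X such that ρ̄(x,y) ≥ d(x,y) for all x ∈ S and y ∈ X. Then there exists i ∈ {0, 1, ..., 2D} with ρ̄(i, i+1) ≥ 2D+1. -/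
/-! By the strong triangle inequality along the chain `0, 1, …, 2D+1`, some unit step is at least
as long as `ρ'(0, 2D+1)`, and domination at the odd endpoint `2D+1` makes that at least `2D+1`. -/

open Set

theorem exists_mem_Ico_le_step_of_ultrametric {β : Type*} [LinearOrder β]
    {ρ : ℤ → ℤ → β} {a b : ℤ} (hab : a < b)
    (hρ : ∀ x ∈ Icc a b, ∀ y ∈ Icc a b, ∀ z ∈ Icc a b, ρ x z ≤ max (ρ x y) (ρ y z)) :
    ∃ i ∈ Ico a b, ρ a b ≤ ρ i (i + 1) := by
  revert hρ
  induction b, (hab : a + 1 ≤ b) using Int.leInduction with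
  | base => exact fun _ => ⟨a, by simp, le_rfl⟩
  | succ b hb ih =>
    intro hρ
    have hsub : Icc a b ⊆ Icc a (b + 1) := Icc_subset_Icc_right (by omega)
    obtain ⟨i, hi, hρi⟩ := ih fun x hx y hy z hz => hρ x (hsub hx) y (hsub hy) z (hsub hz)
    rcases le_max_iff.mp (hρ a ⟨le_rfl, by omega⟩ b ⟨by omega, by omega⟩
        (b + 1) ⟨by omega, le_rfl⟩) with h | h
    · exact ⟨i, ⟨hi.1, hi.2.trans (lt_add_one b)⟩, h.trans hρi⟩
    · exact ⟨b, ⟨by omega, lt_add_one b⟩, h⟩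

theorem ultrametric_large_edge_general
    (D : ℕ)
    (X : Set ℤ) (hXdef : X = {n : ℤ | 0 ≤ n ∧ n ≤ 2 * (D : ℤ) + 1})
    (S : Set ℤ) (hSdef : S = {n : ℤ | n ∈ X ∧ Odd n})
    (ρ' : ℤ → ℤ → ℝ)
    -- ρ' is an ultrametric on X:
    (hρ'_symm : ∀ x ∈ X, ∀ y ∈ X, ρ' x y = ρ' y x)
    (hρ'_ultra : ∀ x ∈ X, ∀ y ∈ X, ∀ z ∈ X, ρ' x z ≤ max (ρ' x y) (ρ' y z))
    -- ρ' dominates d on pairs from S × X: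
    (hρ'_dom : ∀ x ∈ S, ∀ y ∈ X, ((|x - y| : ℤ) : ℝ) ≤ ρ' x y) :
    ∃ i : ℤ, 0 ≤ i ∧ i ≤ 2 * (D : ℤ) ∧ (2 * (D : ℝ) + 1) ≤ ρ' i (i + 1) := by
  subst hXdef hSdef
  obtain ⟨i, hi, hstep⟩ :=
    exists_mem_Ico_le_step_of_ultrametric (b := 2 * (D : ℤ) + 1) (by omega) hρ'_ultra
  have h0 : (0 : ℤ) ∈ Icc 0 (2 * (D : ℤ) + 1) := ⟨le_rfl, by omega⟩
  have htop : 2 * (D : ℤ) + 1 ∈ Icc 0 (2 * (D : ℤ) + 1) := ⟨by omega, le_rfl⟩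
  have hfar : 2 * (D : ℝ) + 1 ≤ ρ' 0 (2 * D + 1) := by
    have := hρ'_dom _ ⟨htop, ⟨D, rfl⟩⟩ 0 h0
    rw [sub_zero, abs_of_nonneg (by omega), hρ'_symm _ htop 0 h0] at this
    exact_mod_cast this
  exact ⟨i, hi.1, Int.lt_add_one_iff.mp hi.2, hfar.trans hstep⟩

/-- On `X = {0, 1, …, 2D+1} ⊆ ℤ` with `d(x,y) = |x − y|` and
`S = {1, 3, …, 2D+1}` the odd points of `X`, any ultrametric `ρ̄` on `X` dominating `d` on
pairs from `S × X` must have `ρ̄(i, i+1) ≥ 2D+1` for some `0 ≤ i ≤ 2D`. -/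
theorem ultrametric_large_edge
    (D : ℕ) (hD : 1 ≤ D)
    (X : Set ℤ) (hXdef : X = {n : ℤ | 0 ≤ n ∧ n ≤ 2 * (D : ℤ) + 1})
    (S : Set ℤ) (hSdef : S = {n : ℤ | n ∈ X ∧ Odd n})
    (ρ' : ℤ → ℤ → ℝ)
    -- ρ' is an ultrametric on X:
    (hρ'_nonneg : ∀ x ∈ X, ∀ y ∈ X, 0 ≤ ρ' x y)
    (hρ'_eq : ∀ x ∈ X, ∀ y ∈ X, (ρ' x y = 0 ↔ x = y))
    (hρ'_symm : ∀ x ∈ X, ∀ y ∈ X, ρ' x y = ρ' y x)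
    (hρ'_ultra : ∀ x ∈ X, ∀ y ∈ X, ∀ z ∈ X, ρ' x z ≤ max (ρ' x y) (ρ' y z))
    -- ρ' dominates d on pairs from S × X:
    (hρ'_dom : ∀ x ∈ S, ∀ y ∈ X, ((|x - y| : ℤ) : ℝ) ≤ ρ' x y) :
    ∃ i : ℤ, 0 ≤ i ∧ i ≤ 2 * (D : ℤ) ∧ (2 * (D : ℝ) + 1) ≤ ρ' i (i + 1) :=
  ultrametric_large_edge_general D X hXdef S hSdef ρ' hρ'_symm hρ'_ultra hρ'_dom
end

section
/- Let D ∈ ℕ with D ≥ 1, let X = {0, 1, ..., 2D+1} ⊆ ℤ with the metric d(x,y) = |x−y|, and let S = {1, 3, ..., 2D+1} ⊆ X be the odd integers in X. Let ρ̄ be any ultrametric on X such that ρ̄(x,y) ≥ d(x,y) for all x ∈ S and y ∈ X. Then there exist x ∈ S and y ∈ X with ρ̄(x,y) ≥ (2D+1)·d(x,y) and d(x,y) > 0; in particular, ρ̄ cannot D'-approximate d on pairs from S × X for any D' < 2D+1. -/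
/-!
Walk from `0` to `2D+1` in unit steps. By the strong triangle inequality
`ρ̄(0, 2D+1)` is at most the largest `ρ̄(i, i+1)`, and one endpoint of that step is odd.
Domination at the pair `(2D+1, 0)` gives `ρ̄(0, 2D+1) ≥ 2D+1`, so this unit step is stretched by a
factor at least `2D+1`; any scaling `c` with `d ≤ c·ρ̄` stretches it by the same factor.
-/

open Set

section UnitSteps

variable {X : Set ℤ} {ρ : ℤ → ℤ → ℝ}

theorem exists_mem_Ico_le_step_of_ultra
    (hultra : ∀ x ∈ X, ∀ y ∈ X, ∀ z ∈ X, ρ x z ≤ max (ρ x y) (ρ y z))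
    {a b : ℤ} (hab : a < b) (hX : Icc a b ⊆ X) :
    ∃ i ∈ Ico a b, ρ a b ≤ ρ i (i + 1) := by
  induction b, (hab : a + 1 ≤ b) using Int.leInduction with
  | base => exact ⟨a, ⟨le_rfl, lt_add_one a⟩, le_rfl⟩
  | succ b hb ih =>
    obtain ⟨i, ⟨hai, hib⟩, hi⟩ := ih ((Icc_subset_Icc_right (by omega)).trans hX)
    have hmem : ∀ n, a ≤ n → n ≤ b + 1 → n ∈ X := fun n h₁ h₂ => hX ⟨h₁, h₂⟩
    rcases le_max_iff.mp (hultra a (hmem a le_rfl (by omega)) b (hmem b (by omega) (by omega))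
        (b + 1) (hmem (b + 1) (by omega) le_rfl)) with h | h
    · exact ⟨i, ⟨hai, by omega⟩, h.trans hi⟩
    · exact ⟨b, ⟨by omega, lt_add_one b⟩, h⟩

theorem exists_odd_unit_step_ge_of_ultra
    (hsymm : ∀ x ∈ X, ∀ y ∈ X, ρ x y = ρ y x)
    (hultra : ∀ x ∈ X, ∀ y ∈ X, ∀ z ∈ X, ρ x z ≤ max (ρ x y) (ρ y z))
    {a b : ℤ} (hab : a < b) (hX : Icc a b ⊆ X) :
    ∃ x ∈ Icc a b, ∃ y ∈ Icc a b, Odd x ∧ |x - y| = 1 ∧ ρ a b ≤ ρ x y := by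
  obtain ⟨i, ⟨hai, hib⟩, hi⟩ := exists_mem_Ico_le_step_of_ultra hultra hab hX
  have hi_mem : i ∈ Icc a b := ⟨hai, hib.le⟩
  have hi₁_mem : i + 1 ∈ Icc a b := ⟨by omega, by omega⟩
  rcases Int.even_or_odd i with hi_even | hi_odd
  · refine ⟨i + 1, hi₁_mem, i, hi_mem, hi_even.add_one, by simp, ?_⟩
    rwa [hsymm _ (hX hi₁_mem) _ (hX hi_mem)]
  · exact ⟨i, hi_mem, i + 1, hi₁_mem, hi_odd, by simp, hi⟩

end UnitSteps

theorem ultrametric_distortion_lower_bound_general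
    (D : ℕ)
    (X : Set ℤ) (hXdef : X = {n : ℤ | 0 ≤ n ∧ n ≤ 2 * (D : ℤ) + 1})
    (S : Set ℤ) (hSdef : S = {n : ℤ | n ∈ X ∧ Odd n})
    (ρ' : ℤ → ℤ → ℝ)
    -- ρ' is an ultrametric on X:
    (hρ'_symm : ∀ x ∈ X, ∀ y ∈ X, ρ' x y = ρ' y x)
    (hρ'_ultra : ∀ x ∈ X, ∀ y ∈ X, ∀ z ∈ X, ρ' x z ≤ max (ρ' x y) (ρ' y z))
    -- ρ' dominates d on pairs from S × X:
    (hρ'_dom : ∀ x ∈ S, ∀ y ∈ X, ((|x - y| : ℤ) : ℝ) ≤ ρ' x y) :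
    (∃ x ∈ S, ∃ y ∈ X,
        (2 * (D : ℝ) + 1) * ((|x - y| : ℤ) : ℝ) ≤ ρ' x y ∧ (0 : ℝ) < ((|x - y| : ℤ) : ℝ)) ∧
      ∀ D' : ℝ, D' < 2 * (D : ℝ) + 1 →
        ¬ ∃ c : ℝ, 0 < c ∧ ∀ x ∈ S, ∀ y ∈ X,
            ((|x - y| : ℤ) : ℝ) ≤ c * ρ' x y ∧ c * ρ' x y ≤ D' * ((|x - y| : ℤ) : ℝ) := by
  replace hXdef : X = Icc 0 (2 * (D : ℤ) + 1) := hXdef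
  subst hXdef hSdef
  obtain ⟨x, hx, y, hy, hx_odd, hxy, hρxy⟩ :=
    exists_odd_unit_step_ge_of_ultra hρ'_symm hρ'_ultra (by positivity) subset_rfl
  have h0 : (0 : ℤ) ∈ Icc 0 (2 * (D : ℤ) + 1) := ⟨le_rfl, by positivity⟩
  have hM : 2 * (D : ℤ) + 1 ∈ {n | n ∈ Icc 0 (2 * (D : ℤ) + 1) ∧ Odd n} :=
    ⟨⟨by positivity, le_rfl⟩, odd_two_mul_add_one _⟩
  have hd_xy : ((|x - y| : ℤ) : ℝ) = 1 := by rw [hxy, Int.cast_one]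
  have hd_M0 : ((|2 * (D : ℤ) + 1 - 0| : ℤ) : ℝ) = 2 * (D : ℝ) + 1 := by
    rw [sub_zero, abs_of_pos (by positivity)]; push_cast; ring
  have hρM0 : ρ' (2 * D + 1) 0 ≤ ρ' x y := by rwa [hρ'_symm _ hM.1 _ h0]
  refine ⟨⟨x, ⟨hx, hx_odd⟩, y, hy, ?_, by rw [hd_xy]; exact one_pos⟩, ?_⟩
  · have := hρ'_dom _ hM 0 h0
    rw [hd_M0] at this
    rw [hd_xy, mul_one]
    exact this.trans hρM0
  · rintro D' hD' ⟨c, hc, happrox⟩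
    have hlower := (happrox _ hM 0 h0).1
    have hupper := (happrox x ⟨hx, hx_odd⟩ y hy).2
    rw [hd_M0] at hlower
    rw [hd_xy, mul_one] at hupper
    linarith [mul_le_mul_of_nonneg_left hρM0 hc.le]

/-- On `X = {0, 1, …, 2D+1} ⊆ ℤ` with `d(x,y) = |x − y|` and
`S = {1, 3, …, 2D+1}` the odd points of `X`, any ultrametric `ρ̄` on `X` dominating `d` on
pairs from `S × X` has a pair `x ∈ S`, `y ∈ X` with `ρ̄(x,y) ≥ (2D+1)·d(x,y)` and
`d(x,y) > 0`; in particular `ρ̄` cannot `D'`-approximate `d` on `S × X` for any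
`D' < 2D+1`. -/
theorem ultrametric_distortion_lower_bound
    (D : ℕ) (hD : 1 ≤ D)
    (X : Set ℤ) (hXdef : X = {n : ℤ | 0 ≤ n ∧ n ≤ 2 * (D : ℤ) + 1})
    (S : Set ℤ) (hSdef : S = {n : ℤ | n ∈ X ∧ Odd n})
    (ρ' : ℤ → ℤ → ℝ)
    -- ρ' is an ultrametric on X:
    (hρ'_nonneg : ∀ x ∈ X, ∀ y ∈ X, 0 ≤ ρ' x y)
    (hρ'_eq : ∀ x ∈ X, ∀ y ∈ X, (ρ' x y = 0 ↔ x = y))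
    (hρ'_symm : ∀ x ∈ X, ∀ y ∈ X, ρ' x y = ρ' y x)
    (hρ'_ultra : ∀ x ∈ X, ∀ y ∈ X, ∀ z ∈ X, ρ' x z ≤ max (ρ' x y) (ρ' y z))
    -- ρ' dominates d on pairs from S × X:
    (hρ'_dom : ∀ x ∈ S, ∀ y ∈ X, ((|x - y| : ℤ) : ℝ) ≤ ρ' x y) :
    (∃ x ∈ S, ∃ y ∈ X,
        (2 * (D : ℝ) + 1) * ((|x - y| : ℤ) : ℝ) ≤ ρ' x y ∧ (0 : ℝ) < ((|x - y| : ℤ) : ℝ)) ∧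
      ∀ D' : ℝ, D' < 2 * (D : ℝ) + 1 →
        ¬ ∃ c : ℝ, 0 < c ∧ ∀ x ∈ S, ∀ y ∈ X,
            ((|x - y| : ℤ) : ℝ) ≤ c * ρ' x y ∧ c * ρ' x y ≤ D' * ((|x - y| : ℤ) : ℝ) :=
  ultrametric_distortion_lower_bound_general D X hXdef S hSdef ρ' hρ'_symm hρ'_ultra hρ'_dom
end
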